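/- Let A be a *-algebra and f a projection in A (or its multiplier algebra) which is full in the strong sense: there exist elements x_α ∈ Af such that for every x ∈ A there is a finite set F with x(Σ_{α∈F} x_α x_α*) = (Σ_{α∈F} x_α x_α*)x = x and x x_α x_α* = 0 for α ∉ F. Then the intersection of the positive cone of A (finite sums of elements x*x) with fAf equals the positive cone of the *-algebra fAf. -/

import Mathlib

/-!
Compressing `a⋆a` by `f` gives `b⋆b` with `b = af ∈ Af`. Fullness supplies a finite family with
`(∑ xₐ xₐ⋆) b = b`, so `b⋆b = ∑ (xₐ⋆b)⋆(xₐ⋆b)`, and each `xₐ⋆b` lies in `fAf`. Hence every element of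
`posCone A ∩ fAf`, being its own compression, is a sum of squares of elements of `fAf`; the converse
inclusion is immediate.
-/

def posCone (A : Type) [NonUnitalRing A] [StarRing A] : Set A :=
  (AddSubmonoid.closure {y : A | ∃ x : A, y = star x * x} : AddSubmonoid A)

section Corner

variable {A : Type*} [NonUnitalSemiring A] [StarRing A] {f : A}

/-- For an idempotent `f`, the corner `fAf` is exactly the set of fixed points of `y ↦ f y f`. -/
def corner (f : A) : AddSubmonoid A where
  carrier := {y | f * y * f = y}
  add_mem' {u v} (hu : f * u * f = u) (hv : f * v * f = v) :=
    show f * (u + v) * f = u + v by rw [mul_add, add_mul, hu, hv]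
  zero_mem' := by simp

def cornerPosCone (f : A) : AddSubmonoid A :=
  AddSubmonoid.closure {y : A | ∃ z : A, f * z * f = z ∧ y = star z * z}

omit [StarRing A] in
theorem mul_eq_self_of_mem_corner (hf : IsIdempotentElem f) {z : A} (hz : z ∈ corner f) :
    z * f = z := by
  rw [← hz, mul_assoc, hf.eq]

theorem mul_star_eq_of_mul_eq (hsa : IsSelfAdjoint f) {b : A} (hb : b * f = b) :
    f * star b = star b := by
  simpa only [star_mul, hsa.star_eq] using congrArg star hb

theorem star_mul_self_mem_corner (hf : IsIdempotentElem f) (hsa : IsSelfAdjoint f) {z : A}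
    (hz : z ∈ corner f) : star z * z ∈ corner f := by
  change f * (star z * z) * f = star z * z
  rw [← mul_assoc, mul_star_eq_of_mul_eq hsa (mul_eq_self_of_mem_corner hf hz), mul_assoc,
    mul_eq_self_of_mem_corner hf hz]

theorem cornerPosCone_le_corner (hf : IsIdempotentElem f) (hsa : IsSelfAdjoint f) :
    cornerPosCone f ≤ corner f :=
  AddSubmonoid.closure_le.mpr fun _ ⟨_, hz, hy⟩ => hy ▸ star_mul_self_mem_corner hf hsa hz

theorem star_mul_self_eq_sum {ι : Type*} (x : ι → A) (F : Finset ι) {b : A}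
    (hb : (∑ α ∈ F, x α * star (x α)) * b = b) :
    star b * b = ∑ α ∈ F, star (star (x α) * b) * (star (x α) * b) := by
  nth_rw 2 [← hb]
  simp only [Finset.sum_mul, Finset.mul_sum, star_mul, star_star, mul_assoc]

theorem star_mul_self_mem_cornerPosCone (hsa : IsSelfAdjoint f) {ι : Type*} {x : ι → A}
    (hx : ∀ α, x α * f = x α)
    (hunit : ∀ a : A, ∃ F : Finset ι, (∑ α ∈ F, x α * star (x α)) * a = a)
    {b : A} (hb : b * f = b) : star b * b ∈ cornerPosCone f := by
  obtain ⟨F, hF⟩ := hunit b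
  rw [star_mul_self_eq_sum x F hF]
  refine AddSubmonoid.sum_mem _ fun α _ => AddSubmonoid.subset_closure ⟨star (x α) * b, ?_, rfl⟩
  rw [mul_assoc, mul_assoc, hb, ← mul_assoc, mul_star_eq_of_mul_eq hsa (hx α)]

end Corner

theorem cornerPosCone_subset_posCone {A : Type} [NonUnitalRing A] [StarRing A] (f : A) :
    (cornerPosCone f : Set A) ⊆ posCone A :=
  AddSubmonoid.closure_mono fun _ ⟨z, _, hy⟩ => ⟨z, hy⟩

theorem mul_mul_mem_cornerPosCone {A : Type} [NonUnitalRing A] [StarRing A] {f : A}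
    (hf : IsIdempotentElem f) (hsa : IsSelfAdjoint f) {ι : Type*} {x : ι → A}
    (hx : ∀ α, x α * f = x α)
    (hunit : ∀ a : A, ∃ F : Finset ι, (∑ α ∈ F, x α * star (x α)) * a = a)
    {y : A} (hy : y ∈ posCone A) : f * y * f ∈ cornerPosCone f := by
  let compress : A →+ A := (AddMonoidHom.mulRight f).comp (AddMonoidHom.mulLeft f)
  suffices h : AddSubmonoid.closure {y : A | ∃ a : A, y = star a * a} ≤
      (cornerPosCone f).comap compress from h hy
  refine AddSubmonoid.closure_le.mpr ?_
  rintro _ ⟨a, rfl⟩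
  have h : f * (star a * a) * f = star (a * f) * (a * f) := by
    rw [star_mul, hsa.star_eq]
    simp only [mul_assoc]
  change f * (star a * a) * f ∈ cornerPosCone f
  rw [h]
  exact star_mul_self_mem_cornerPosCone hsa hx hunit (by rw [mul_assoc, hf.eq])

theorem posCone_corner_of_full
    (A : Type) [NonUnitalRing A] [StarRing A]
    (f : A) (hidem : f * f = f) (hsa : star f = f)
    (ι : Type) (x : ι → A) (hx : ∀ α, x α * f = x α)
    (hfull : ∀ a : A, ∃ F : Finset ι,
      a * (∑ α ∈ F, x α * star (x α)) = a ∧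
      (∑ α ∈ F, x α * star (x α)) * a = a ∧
      ∀ α ∉ F, a * (x α * star (x α)) = 0) :
    posCone A ∩ {y : A | f * y * f = y} =
      (AddSubmonoid.closure {y : A | ∃ z : A, f * z * f = z ∧ y = star z * z} : AddSubmonoid A) := by
  have hunit : ∀ a : A, ∃ F : Finset ι, (∑ α ∈ F, x α * star (x α)) * a = a :=
    fun a => (hfull a).imp fun _ h => h.2.1
  ext y
  constructor
  · rintro ⟨hy, hyf⟩
    exact hyf ▸ mul_mul_mem_cornerPosCone hidem hsa hx hunit hy
  · intro hy
    exact ⟨cornerPosCone_subset_posCone f hy, cornerPosCone_le_corner hidem hsa hy⟩
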